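/- For x → ∞ and a_n → 0 with x²a_n → 0, the Gaussian tail satisfies (1 - Φ(x(1 + a_n))) = (1 - Φ(x))·exp(-x²a_n)·(1 + O(x^{-2}) + O(x²a_n²)). In particular, for fixed x > 1 and |a| ≤ 1/(2x²), |(1-Φ(x(1+a)))/((1-Φ(x))·e^{-x²a}) - 1| ≤ C(x^{-2} + x²a²) for an absolute constant C. -/

import Mathlib

open MeasureTheory Real

noncomputable def stdNormalPDF (x : ℝ) : ℝ := (Real.sqrt (2 * Real.pi))⁻¹ * Real.exp (-x ^ 2 / 2)

noncomputable def stdNormalCDF (x : ℝ) : ℝ := ∫ u in Set.Iic x, stdNormalPDF u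

/-!
Write `1 - Φ = φ · R` with `R` the Mills ratio. Comparing `e^{-u²/2}` on `(x, ∞)` with the
derivatives of `-e^{-u²/2}/u` and `-u e^{-u²/2}/(u² + 1)` gives the classical bounds
`x/(x² + 1) ≤ R(x) ≤ 1/x`, hence `xy/(y² + 1) ≤ R(y)/R(x) ≤ (x² + 1)/(xy)`.
For `y = x(1 + a)` one has `y²/2 = x²/2 + x²a + x²a²/2`, so the ratio to be estimated is
`e^{-x²a²/2} R(y)/R(x)`, and `e^{-x²a²/2} ∈ [1 - x²a²/2, 1]`. Once `x²|a| ≤ 1/2`, elementary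
algebra puts both envelopes within `3(x⁻² + x²a²)` of `1`.
-/

open Filter Set Topology

lemma integral_Ioi_le_neg_of_hasDerivAt {f F F' : ℝ → ℝ} {x : ℝ}
    (hF : ∀ u ∈ Ici x, HasDerivAt F (F' u) u) (hF' : IntegrableOn F' (Ioi x))
    (hF_top : Tendsto F atTop (𝓝 0)) (hf : IntegrableOn f (Ioi x))
    (hfF' : ∀ u ∈ Ioi x, f u ≤ F' u) :
    ∫ u in Ioi x, f u ≤ -F x := by
  calc ∫ u in Ioi x, f u ≤ ∫ u in Ioi x, F' u := setIntegral_mono_on hf hF' measurableSet_Ioi hfF'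
    _ = -F x := by rw [integral_Ioi_of_hasDerivAt_of_tendsto' hF hF' hF_top, zero_sub]

lemma neg_le_integral_Ioi_of_hasDerivAt {f F F' : ℝ → ℝ} {x : ℝ}
    (hF : ∀ u ∈ Ici x, HasDerivAt F (F' u) u) (hF' : IntegrableOn F' (Ioi x))
    (hF_top : Tendsto F atTop (𝓝 0)) (hf : IntegrableOn f (Ioi x))
    (hF'f : ∀ u ∈ Ioi x, F' u ≤ f u) :
    -F x ≤ ∫ u in Ioi x, f u := by
  calc -F x = ∫ u in Ioi x, F' u := by
        rw [integral_Ioi_of_hasDerivAt_of_tendsto' hF hF' hF_top, zero_sub]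
    _ ≤ ∫ u in Ioi x, f u := setIntegral_mono_on hF' hf measurableSet_Ioi hF'f

lemma integrable_exp_neg_sq_div_two : Integrable fun u : ℝ ↦ exp (-u ^ 2 / 2) := by
  simpa [div_eq_inv_mul, neg_mul] using integrable_exp_neg_mul_sq (b := 1 / 2) (by norm_num)

lemma integral_exp_neg_sq_div_two : ∫ u : ℝ, exp (-u ^ 2 / 2) = √(2 * π) := by
  simpa [div_eq_inv_mul, neg_mul, mul_comm] using integral_gaussian (1 / 2)

lemma tendsto_exp_neg_sq_div_two_atTop : Tendsto (fun u : ℝ ↦ exp (-u ^ 2 / 2)) atTop (𝓝 0) := by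
  refine tendsto_exp_atBot.comp ?_
  simpa only [neg_div, Function.comp_def] using
    tendsto_neg_atTop_atBot.comp ((tendsto_pow_atTop two_ne_zero).atTop_div_const two_pos)

lemma hasDerivAt_exp_neg_sq_div_two (u : ℝ) :
    HasDerivAt (fun u : ℝ ↦ exp (-u ^ 2 / 2)) (-u * exp (-u ^ 2 / 2)) u := by
  convert (((hasDerivAt_id' u).fun_pow 2).fun_neg.div_const 2).exp using 1
  ring

lemma exp_sq_div_two_mul_exp_neg_sq_div_two (x : ℝ) : exp (x ^ 2 / 2) * exp (-x ^ 2 / 2) = 1 := by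
  rw [← exp_add, neg_div, add_neg_cancel, exp_zero]

noncomputable def millsRatio (x : ℝ) : ℝ := (1 - stdNormalCDF x) / stdNormalPDF x

lemma stdNormalPDF_pos (x : ℝ) : 0 < stdNormalPDF x := by
  unfold stdNormalPDF
  positivity

lemma one_sub_stdNormalCDF_eq (x : ℝ) : 1 - stdNormalCDF x = stdNormalPDF x * millsRatio x :=
  (mul_div_cancel₀ _ (stdNormalPDF_pos x).ne').symm

lemma millsRatio_eq_integral (x : ℝ) :
    millsRatio x = exp (x ^ 2 / 2) * ∫ u in Ioi x, exp (-u ^ 2 / 2) := by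
  have hsplit : (∫ u in Iic x, exp (-u ^ 2 / 2)) + ∫ u in Ioi x, exp (-u ^ 2 / 2) = √(2 * π) := by
    rw [intervalIntegral.integral_Iic_add_Ioi integrable_exp_neg_sq_div_two.integrableOn
      integrable_exp_neg_sq_div_two.integrableOn, integral_exp_neg_sq_div_two]
  have hπ : (√(2 * π))⁻¹ * √(2 * π) = 1 := inv_mul_cancel₀ (by positivity)
  rw [millsRatio, div_eq_iff (stdNormalPDF_pos x).ne']
  simp only [stdNormalCDF, stdNormalPDF, integral_const_mul]
  linear_combination (-(√(2 * π))⁻¹) * hsplit - hπ -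
    ((√(2 * π))⁻¹ * ∫ u in Ioi x, exp (-u ^ 2 / 2)) * exp_sq_div_two_mul_exp_neg_sq_div_two x

lemma millsRatio_le {x : ℝ} (hx : 0 < x) : millsRatio x ≤ x⁻¹ := by
  have hF : ∀ u ∈ Ici x, HasDerivAt (fun u ↦ -exp (-u ^ 2 / 2) / u)
      ((1 + 1 / u ^ 2) * exp (-u ^ 2 / 2)) u := fun u hu ↦ by
    have hu : u ≠ 0 := (hx.trans_le hu).ne'
    refine ((hasDerivAt_exp_neg_sq_div_two u).fun_neg.fun_div (hasDerivAt_id' u) hu).congr_deriv ?_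
    field_simp
    ring
  have hF_top : Tendsto (fun u ↦ -exp (-u ^ 2 / 2) / u) atTop (𝓝 0) := by
    simpa [div_eq_mul_inv] using tendsto_exp_neg_sq_div_two_atTop.neg.mul tendsto_inv_atTop_zero
  have hF' := integrableOn_Ioi_deriv_of_nonneg' hF (fun u _ ↦ by positivity) hF_top
  have htail := integral_Ioi_le_neg_of_hasDerivAt hF hF' hF_top
    integrable_exp_neg_sq_div_two.integrableOn fun u _ ↦
      le_mul_of_one_le_left (exp_pos _).le (le_add_of_nonneg_right (by positivity))
  calc millsRatio x ≤ exp (x ^ 2 / 2) * (exp (-x ^ 2 / 2) / x) := by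
        rw [millsRatio_eq_integral]
        gcongr
        exact htail.trans_eq (by ring)
    _ = x⁻¹ := by rw [mul_div_assoc', exp_sq_div_two_mul_exp_neg_sq_div_two, one_div]

lemma le_millsRatio (x : ℝ) : x / (x ^ 2 + 1) ≤ millsRatio x := by
  have hF : ∀ u ∈ Ici x, HasDerivAt (fun u ↦ -(u / (u ^ 2 + 1) * exp (-u ^ 2 / 2)))
      ((1 - 2 / (u ^ 2 + 1) ^ 2) * exp (-u ^ 2 / 2)) u := fun u _ ↦ by
    have hu : u ^ 2 + 1 ≠ 0 := by positivity
    refine (((hasDerivAt_id' u).fun_div ((hasDerivAt_pow 2 u).add_const 1) hu).fun_mul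
      (hasDerivAt_exp_neg_sq_div_two u)).fun_neg.congr_deriv ?_
    field_simp
    ring
  have hF_top : Tendsto (fun u ↦ -(u / (u ^ 2 + 1) * exp (-u ^ 2 / 2))) atTop (𝓝 0) := by
    refine squeeze_zero_norm (fun u ↦ ?_) tendsto_exp_neg_sq_div_two_atTop
    have hu : |u| ≤ u ^ 2 + 1 := by nlinarith [sq_abs u, abs_nonneg u]
    rw [norm_neg, norm_mul, norm_div, Real.norm_of_nonneg (exp_pos _).le,
      Real.norm_of_nonneg (by positivity : 0 ≤ u ^ 2 + 1), Real.norm_eq_abs]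
    exact mul_le_of_le_one_left (exp_pos _).le (div_le_one_of_le₀ hu (by positivity))
  have hF' : IntegrableOn (fun u ↦ (1 - 2 / (u ^ 2 + 1) ^ 2) * exp (-u ^ 2 / 2)) (Ioi x) := by
    refine integrable_exp_neg_sq_div_two.integrableOn.bdd_mul (c := 1)
      (by fun_prop (disch := intro; positivity) :
        Continuous fun u : ℝ ↦ 1 - 2 / (u ^ 2 + 1) ^ 2).aestronglyMeasurable
      (ae_of_all _ fun u ↦ ?_)
    have h2 : 2 / (u ^ 2 + 1) ^ 2 ≤ 2 :=
      div_le_self zero_le_two (one_le_pow₀ (by nlinarith [sq_nonneg u]))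
    rw [Real.norm_eq_abs, abs_le]
    constructor <;> linarith [show 0 ≤ 2 / (u ^ 2 + 1) ^ 2 by positivity]
  have htail := neg_le_integral_Ioi_of_hasDerivAt hF hF' hF_top
    integrable_exp_neg_sq_div_two.integrableOn fun u _ ↦
      mul_le_of_le_one_left (exp_pos _).le (sub_le_self _ (by positivity))
  calc x / (x ^ 2 + 1) = exp (x ^ 2 / 2) * (x / (x ^ 2 + 1) * exp (-x ^ 2 / 2)) := by
        rw [mul_left_comm, exp_sq_div_two_mul_exp_neg_sq_div_two, mul_one]
    _ ≤ millsRatio x := by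
        rw [millsRatio_eq_integral]
        gcongr
        simpa only [neg_neg] using htail

lemma millsRatio_pos {x : ℝ} (hx : 0 < x) : 0 < millsRatio x :=
  (by positivity : 0 < x / (x ^ 2 + 1)).trans_le (le_millsRatio x)

lemma millsRatio_div_le {x y : ℝ} (hx : 0 < x) (hy : 0 < y) :
    millsRatio y / millsRatio x ≤ (x ^ 2 + 1) / (x * y) :=
  calc millsRatio y / millsRatio x ≤ y⁻¹ / (x / (x ^ 2 + 1)) :=
        div_le_div₀ (by positivity) (millsRatio_le hy) (by positivity) (le_millsRatio x)
    _ = (x ^ 2 + 1) / (x * y) := by field_simp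

lemma le_millsRatio_div {x y : ℝ} (hx : 0 < x) (hy : 0 ≤ y) :
    x * y / (y ^ 2 + 1) ≤ millsRatio y / millsRatio x :=
  calc x * y / (y ^ 2 + 1) = y / (y ^ 2 + 1) / x⁻¹ := by field_simp
    _ ≤ millsRatio y / millsRatio x :=
        div_le_div₀ ((by positivity : 0 ≤ y / (y ^ 2 + 1)).trans (le_millsRatio y))
          (le_millsRatio y) (millsRatio_pos hx) (millsRatio_le hx)

lemma stdNormal_tail_ratio_eq (x a : ℝ) :
    (1 - stdNormalCDF (x * (1 + a))) / ((1 - stdNormalCDF x) * exp (-x ^ 2 * a)) =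
      exp (-(x ^ 2 * a ^ 2) / 2) * (millsRatio (x * (1 + a)) / millsRatio x) := by
  have hexp : exp (-(x * (1 + a)) ^ 2 / 2) =
      exp (-(x ^ 2 * a ^ 2) / 2) * (exp (-x ^ 2 / 2) * exp (-x ^ 2 * a)) := by
    rw [← exp_add, ← exp_add]; ring_nf
  rw [one_sub_stdNormalCDF_eq, one_sub_stdNormalCDF_eq, stdNormalPDF, stdNormalPDF, hexp]
  field_simp

lemma abs_le_half_of_abs_sq_mul_le {x a : ℝ} (hx : 1 ≤ x) (ha : |x ^ 2 * a| ≤ 1 / 2) :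
    |a| ≤ 1 / 2 := by
  refine le_trans ?_ ha
  rw [abs_mul, abs_of_nonneg (sq_nonneg x)]
  exact le_mul_of_one_le_left (abs_nonneg a) (one_le_pow₀ hx)

lemma sq_add_one_div_le {x a : ℝ} (hx : 1 ≤ x) (ha : |x ^ 2 * a| ≤ 1 / 2) :
    (x ^ 2 + 1) / (x * (x * (1 + a))) ≤ 1 + 3 * (x⁻¹ ^ 2 + x ^ 2 * a ^ 2) := by
  obtain ⟨hc₁, hc₂⟩ := abs_le.mp ha
  obtain ⟨ha₁, ha₂⟩ := abs_le.mp (abs_le_half_of_abs_sq_mul_le hx ha)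
  have hw : x⁻¹ ^ 2 * x ^ 2 = 1 := by field_simp
  rw [div_le_iff₀ (by nlinarith)]
  nlinarith [mul_nonneg (sq_nonneg (x ^ 2 * a)) (by linarith : (0:ℝ) ≤ 1 + a)]

lemma le_one_sub_mul_div_sq_add_one {x a : ℝ} (hx : 1 ≤ x) (ha : |x ^ 2 * a| ≤ 1 / 2) :
    1 - 3 * (x⁻¹ ^ 2 + x ^ 2 * a ^ 2) ≤
      (1 - x ^ 2 * a ^ 2 / 2) * (x * (x * (1 + a)) / ((x * (1 + a)) ^ 2 + 1)) := by
  obtain ⟨hc₁, hc₂⟩ := abs_le.mp ha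
  obtain ⟨ha₁, ha₂⟩ := abs_le.mp (abs_le_half_of_abs_sq_mul_le hx ha)
  have hw : x⁻¹ ^ 2 * x ^ 2 = 1 := by field_simp
  rw [← mul_div_assoc, le_div_iff₀ (by positivity)]
  nlinarith [mul_nonneg (sq_nonneg (x ^ 2 * a)) (by linarith : (0:ℝ) ≤ 1 + a),
    mul_nonneg (by positivity : (0:ℝ) ≤ x⁻¹ ^ 2) (sq_nonneg (x ^ 2 * a))]

/-- Gaussian tail under a small relative perturbation of the argument: there is an absolute
constant `C` such that for all `x > 1` and `|a| ≤ 1/(2x²)`,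
`|(1-Φ(x(1+a)))/((1-Φ(x))·e^{-x²a}) - 1| ≤ C(x⁻² + x²a²)`. -/
theorem gaussian_tail_perturbation :
    ∃ C : ℝ, 0 < C ∧ ∀ x a : ℝ, 1 < x → |a| ≤ 1 / (2 * x ^ 2) →
      |(1 - stdNormalCDF (x * (1 + a))) / ((1 - stdNormalCDF x) * Real.exp (-x ^ 2 * a)) - 1|
        ≤ C * (x⁻¹ ^ 2 + x ^ 2 * a ^ 2) := by
  refine ⟨3, three_pos, fun x a hx ha ↦ ?_⟩
  have hc : |x ^ 2 * a| ≤ 1 / 2 := by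
    rwa [abs_mul, abs_of_pos (by positivity), ← le_div_iff₀' (by positivity), div_div]
  have hy : 0 < x * (1 + a) :=
    mul_pos (by linarith) (by linarith [abs_le.mp (abs_le_half_of_abs_sq_mul_le hx.le hc)])
  have hxa : x ^ 2 * a ^ 2 ≤ 1 / 4 := by
    nlinarith [sq_abs (x ^ 2 * a), abs_nonneg (x ^ 2 * a), sq_nonneg a]
  have hE_le : exp (-(x ^ 2 * a ^ 2) / 2) ≤ 1 := exp_le_one_iff.mpr (by nlinarith)
  have hE_ge : 1 - x ^ 2 * a ^ 2 / 2 ≤ exp (-(x ^ 2 * a ^ 2) / 2) := by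
    linarith [add_one_le_exp (-(x ^ 2 * a ^ 2) / 2)]
  have hR₀ : 0 ≤ millsRatio (x * (1 + a)) / millsRatio x :=
    div_nonneg (millsRatio_pos hy).le (millsRatio_pos (by linarith)).le
  have hR_le := (millsRatio_div_le (by linarith) hy).trans (sq_add_one_div_le hx.le hc)
  have hR_ge := (le_one_sub_mul_div_sq_add_one hx.le hc).trans
    (mul_le_mul_of_nonneg_left (le_millsRatio_div (by linarith) hy.le) (by linarith))
  rw [stdNormal_tail_ratio_eq, abs_sub_le_iff]
  constructor
  · linarith [mul_le_mul_of_nonneg_right hE_le hR₀]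
  · linarith [mul_le_mul_of_nonneg_right hE_ge hR₀]
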